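/- Let α₅ := (1/6)·(8 − 20/(9√201 − 91)^{1/3} + (9√201 − 91)^{1/3}). Then 3/4 < α₅ < 1, and for every real α with 3/4 < α < 1 one has 4 − 3/α ≤ (4 − 4α²)/(5 − 4α) if and only if α ≤ α₅; in particular 4 − 3/α₅ = (4 − 4α₅²)/(5 − 4α₅). (This is the statement that α_*(5) = α₅ for m(α,5) = min{(4−4α²)/(5−4α), 4 − 3/α}.) -/

import Mathlib

/-!
Clearing the (positive) denominators `α` and `5 − 4α`, the inequality
`4 − 3/α ≤ (4 − 4α²)/(5 − 4α)` becomes `p(α) ≤ 0` for the cubic `p(x) = 4x³ − 16x² + 28x − 15`.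
Its derivative `12x² − 32x + 28` has negative discriminant, so `p` is strictly increasing, and
`α₅` is its unique real root by Cardano's formula. As `p(3/4) < 0 < p(1)`, the root lies in
`(3/4, 1)`.
-/

/-- The constant `α_*(5) = (1/6)·(8 − 20/(9√201 − 91)^{1/3} + (9√201 − 91)^{1/3})`. -/
noncomputable def alphaStar5 : ℝ :=
  (1 / 6) * (8 - 20 / (9 * Real.sqrt 201 - 91) ^ ((1 : ℝ) / 3)
    + (9 * Real.sqrt 201 - 91) ^ ((1 : ℝ) / 3))

def crossingCubic (x : ℝ) : ℝ := 4 * x ^ 3 - 16 * x ^ 2 + 28 * x - 15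

theorem strictMono_crossingCubic : StrictMono crossingCubic := by
  intro x y hxy
  have hfactor : crossingCubic y - crossingCubic x
      = (y - x) * (12 * (x + y - 8 / 3) ^ 2 + 4 * (x - y) ^ 2 + 80 / 3) / 4 := by
    unfold crossingCubic; ring
  rw [← sub_pos, hfactor]
  exact div_pos (mul_pos (sub_pos.2 hxy) (by positivity)) four_pos

theorem sub_eq_neg_crossingCubic_div (α : ℝ) (hα : α ≠ 0) (hα' : 5 - 4 * α ≠ 0) :
    (4 - 4 * α ^ 2) / (5 - 4 * α) - (4 - 3 / α) = -crossingCubic α / (α * (5 - 4 * α)) := by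
  unfold crossingCubic
  field_simp
  ring

theorem le_iff_crossingCubic_nonpos (α : ℝ) (hα : 0 < α) (hα' : α < 5 / 4) :
    4 - 3 / α ≤ (4 - 4 * α ^ 2) / (5 - 4 * α) ↔ crossingCubic α ≤ 0 := by
  have hden : 0 < α * (5 - 4 * α) := mul_pos hα (by linarith)
  rw [← sub_nonneg, sub_eq_neg_crossingCubic_div α hα.ne' (by linarith), le_div_iff₀ hden,
    zero_mul, neg_nonneg]

theorem cbrt_base_pos : 0 < 9 * Real.sqrt 201 - 91 := by
  have : (91 / 9 : ℝ) < Real.sqrt 201 := Real.lt_sqrt_of_sq_lt (by norm_num)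
  linarith

theorem crossingCubic_alphaStar5 : crossingCubic alphaStar5 = 0 := by
  set c := (9 * Real.sqrt 201 - 91) ^ ((1 : ℝ) / 3) with hc
  have hc0 : c ≠ 0 := (Real.rpow_pos_of_pos cbrt_base_pos _).ne'
  have hc3 : c ^ 3 = 9 * Real.sqrt 201 - 91 := by
    rw [hc, show (1 : ℝ) / 3 = ((3 : ℕ) : ℝ)⁻¹ by norm_num,
      Real.rpow_inv_natCast_pow cbrt_base_pos.le three_ne_zero]
  have hsqrt : Real.sqrt 201 ^ 2 = 201 := Real.sq_sqrt (by norm_num)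
  -- `c³` is a root of `4t² + 728t − 32000`, the resolvent quadratic of Cardano's formula.
  have hresolvent : 4 * (c ^ 3) ^ 2 + 728 * c ^ 3 - 32000 = 0 := by
    rw [hc3]; linear_combination 324 * hsqrt
  have hexpand : crossingCubic alphaStar5
      = (4 * (c ^ 3) ^ 2 + 728 * c ^ 3 - 32000) / (216 * c ^ 3) := by
    rw [crossingCubic, alphaStar5, ← hc]; field_simp; ring
  rw [hexpand, hresolvent, zero_div]

/-- `3/4 < α₅ < 1`, and for every real `α` with `3/4 < α < 1` one has
`4 − 3/α ≤ (4 − 4α²)/(5 − 4α)` if and only if `α ≤ α₅`; in particular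
`4 − 3/α₅ = (4 − 4α₅²)/(5 − 4α₅)`. This is the statement `α_*(5) = α₅`. -/
theorem statement5 :
    (3 / 4 < alphaStar5 ∧ alphaStar5 < 1) ∧
    (∀ α : ℝ, 3 / 4 < α → α < 1 →
      (4 - 3 / α ≤ (4 - 4 * α ^ 2) / (5 - 4 * α) ↔ α ≤ alphaStar5)) ∧
    4 - 3 / alphaStar5 = (4 - 4 * alphaStar5 ^ 2) / (5 - 4 * alphaStar5) := by
  have hroot := crossingCubic_alphaStar5
  have hlower : 3 / 4 < alphaStar5 :=
    strictMono_crossingCubic.lt_iff_lt.1 (by rw [hroot, crossingCubic]; norm_num)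
  have hupper : alphaStar5 < 1 :=
    strictMono_crossingCubic.lt_iff_lt.1 (by rw [hroot, crossingCubic]; norm_num)
  refine ⟨⟨hlower, hupper⟩, fun α hα hα' => ?_, ?_⟩
  · rw [le_iff_crossingCubic_nonpos α (by linarith) (by linarith), ← hroot,
      strictMono_crossingCubic.le_iff_le]
  · have hsub := sub_eq_neg_crossingCubic_div alphaStar5 (by linarith) (by linarith)
    rw [hroot, neg_zero, zero_div, sub_eq_zero] at hsub
    exact hsub.symm
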